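/- The Wick product on the Hida test function space is continuous: for all r > 0, C > 0 there exist r₁, C₁ and a constant K such that ‖:F₁F₂:‖_{r,C} ≤ K ‖F₁‖_{r₁,C₁} ‖F₂‖_{r₁,C₁} for all F₁, F₂ in W·N_{∞−}. -/

import Mathlib

open scoped ENNReal

/-- The Hida weight `w_r(I) = ∏_{(k,i) ∈ I} (C₁ k² + 1)^{r/2}`. -/
noncomputable def hidaWeight {β : Type*} (C₁ r : ℝ) (I : Multiset (ℤ × β)) : ℝ :=
  (I.map (fun p => (C₁ * (p.1 : ℝ) ^ 2 + 1) ^ (r / 2))).prod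

/-- The squared Fock norm `‖F‖²_{r,C} = Σ_I |b_I|² w_r(I) C^{|I|}`. -/
noncomputable def fockNormSq {β : Type*} (C₁ r C : ℝ) (b : Multiset (ℤ × β) → ℂ) : ℝ≥0∞ :=
  ∑' I : Multiset (ℤ × β), (‖b I‖₊ : ℝ≥0∞) ^ 2 *
    ENNReal.ofReal (hidaWeight C₁ r I) * ENNReal.ofReal C ^ Multiset.card I

/-- The Fock norm `‖F‖_{r,C}`. -/
noncomputable def fockNorm {β : Type*} (C₁ r C : ℝ) (b : Multiset (ℤ × β) → ℂ) : ℝ≥0∞ :=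
  fockNormSq C₁ r C b ^ (1 / 2 : ℝ)

/-- Membership in the Hida test function space `W·N_{∞−}`. -/
def memHida {β : Type*} (C₁ : ℝ) (b : Multiset (ℤ × β) → ℂ) : Prop :=
  ∀ r C : ℝ, 0 < r → 0 < C → fockNormSq C₁ r C b < ⊤

/-- Coefficients of the Wick product. -/
noncomputable def wickProd {β : Type*} [DecidableEq β]
    (b₁ b₂ : Multiset (ℤ × β) → ℂ) (I : Multiset (ℤ × β)) : ℂ :=
  ∑ J ∈ I.powerset.toFinset, b₁ J * b₂ (I - J)

/-- The Hida weight is nonnegative. -/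
lemma hidaWeight_nonneg {β : Type*} {C₁ : ℝ} (hC₁ : 0 ≤ C₁) (r : ℝ)
    (I : Multiset (ℤ × β)) : 0 ≤ hidaWeight C₁ r I := by
  apply Multiset.prod_nonneg
  intro x hx
  simp only [Multiset.mem_map] at hx
  obtain ⟨p, -, rfl⟩ := hx
  positivity

/-- The Hida weight is multiplicative. -/
lemma hidaWeight_add {β : Type*} (C₁ r : ℝ) (I J : Multiset (ℤ × β)) :
    hidaWeight C₁ r (I + J) = hidaWeight C₁ r I * hidaWeight C₁ r J := by
  simp [hidaWeight]

/-- Quadratic bound on a square of a finite sum in `ℝ≥0∞`. -/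
lemma sq_sum_le_two_card_mul_sum_sq {γ : Type*} (s : Finset γ) (a : γ → ℝ≥0∞) :
    (∑ x ∈ s, a x) ^ 2 ≤ (2 * s.card) * ∑ x ∈ s, a x ^ 2 := by
  have h2 : ∀ u v : ℝ≥0∞, u * v ≤ u ^ 2 + v ^ 2 := by
    intro u v
    rcases le_total u v with h | h
    · calc u * v ≤ v * v := by gcongr
        _ = v ^ 2 := (sq v).symm
        _ ≤ u ^ 2 + v ^ 2 := le_add_self
    · calc u * v ≤ u * u := by gcongr
        _ = u ^ 2 := (sq u).symm
        _ ≤ u ^ 2 + v ^ 2 := le_self_add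
  calc (∑ x ∈ s, a x) ^ 2 = ∑ x ∈ s, ∑ y ∈ s, a x * a y := by
        rw [sq, Finset.sum_mul_sum]
    _ ≤ ∑ x ∈ s, ∑ y ∈ s, (a x ^ 2 + a y ^ 2) := by
        gcongr with x hx y hy; exact h2 _ _
    _ = (2 * s.card) * ∑ x ∈ s, a x ^ 2 := by
        simp only [Finset.sum_add_distrib, Finset.sum_const, nsmul_eq_mul]
        rw [← Finset.mul_sum]
        ring

/-- Continuity of the Wick product on the Hida test function space: for all `r, C > 0`
there exist `r₁, C₁'` and a constant `K` with
`‖:F₁F₂:‖_{r,C} ≤ K ‖F₁‖_{r₁,C₁'} ‖F₂‖_{r₁,C₁'}` for all `F₁, F₂ ∈ W·N_{∞−}`. -/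
theorem wick_continuous (n : ℕ) (C₁ : ℝ) (hC₁ : 0 < C₁) :
    ∀ r C : ℝ, 0 < r → 0 < C → ∃ r₁ C₁' : ℝ, ∃ K : ℝ≥0∞, 0 < r₁ ∧ 0 < C₁' ∧
      0 < K ∧ K < ⊤ ∧
      ∀ b₁ b₂ : Multiset (ℤ × Fin n) → ℂ, memHida C₁ b₁ → memHida C₁ b₂ →
        fockNorm C₁ r C (wickProd b₁ b₂) ≤
          K * fockNorm C₁ r₁ C₁' b₁ * fockNorm C₁ r₁ C₁' b₂ := by
  intro r C hr hC
  refine ⟨r, 2 * C, 2, hr, by linarith, by norm_num, by norm_num, ?_⟩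
  intro b₁ b₂ _ _
  set W : Multiset (ℤ × Fin n) → ℝ≥0∞ := fun I => ENNReal.ofReal (hidaWeight C₁ r I) with hW
  set c : ℝ≥0∞ := ENNReal.ofReal C with hc
  have hW_add : ∀ I J : Multiset (ℤ × Fin n), W (I + J) = W I * W J := by
    intro I J
    simp only [hW, hidaWeight_add]
    exact ENNReal.ofReal_mul (hidaWeight_nonneg hC₁.le r I)
  -- the two single norms squared, with parameter `2C`
  set A : Multiset (ℤ × Fin n) → ℝ≥0∞ :=
    fun J => (‖b₁ J‖₊ : ℝ≥0∞) ^ 2 * W J * (2 * c) ^ Multiset.card J with hA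
  set B : Multiset (ℤ × Fin n) → ℝ≥0∞ :=
    fun J => (‖b₂ J‖₊ : ℝ≥0∞) ^ 2 * W J * (2 * c) ^ Multiset.card J with hB
  have h2c : ENNReal.ofReal (2 * C) = 2 * c := by
    rw [hc, ENNReal.ofReal_mul (by norm_num)]
    norm_num
  -- key inequality for the squared norms
  have key : fockNormSq C₁ r C (wickProd b₁ b₂) ≤
      2 * fockNormSq C₁ r (2 * C) b₁ * fockNormSq C₁ r (2 * C) b₂ := by
    have hSq1 : fockNormSq C₁ r (2 * C) b₁ = ∑' J : Multiset (ℤ × Fin n), A J := by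
      simp only [fockNormSq, hA, h2c, hW]
    have hSq2 : fockNormSq C₁ r (2 * C) b₂ = ∑' J : Multiset (ℤ × Fin n), B J := by
      simp only [fockNormSq, hB, h2c, hW]
    have pointwise : ∀ I : Multiset (ℤ × Fin n),
        (‖wickProd b₁ b₂ I‖₊ : ℝ≥0∞) ^ 2 * W I * c ^ Multiset.card I ≤
          ∑ J ∈ I.powerset.toFinset, 2 * A J * B (I - J) := by
      intro I
      set s := I.powerset.toFinset with hs
      have hmem : ∀ J ∈ s, J ≤ I := by
        intro J hJ
        rw [hs, Multiset.mem_toFinset, Multiset.mem_powerset] at hJ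
        exact hJ
      have hcard : (s.card : ℝ≥0∞) ≤ 2 ^ Multiset.card I := by
        have h1 : s.card ≤ Multiset.card I.powerset := Multiset.toFinset_card_le _
        have h2 : Multiset.card I.powerset = 2 ^ Multiset.card I :=
          Multiset.card_powerset I
        calc (s.card : ℝ≥0∞) ≤ ((2 ^ Multiset.card I : ℕ) : ℝ≥0∞) := by
              exact_mod_cast h1.trans h2.le
          _ = 2 ^ Multiset.card I := by push_cast; ring
      -- step 1: norm of the sum
      have step1 : (‖wickProd b₁ b₂ I‖₊ : ℝ≥0∞) ≤
          ∑ J ∈ s, (‖b₁ J‖₊ : ℝ≥0∞) * (‖b₂ (I - J)‖₊ : ℝ≥0∞) := by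
        rw [wickProd]
        calc (‖∑ J ∈ s, b₁ J * b₂ (I - J)‖₊ : ℝ≥0∞)
            ≤ ∑ J ∈ s, (‖b₁ J * b₂ (I - J)‖₊ : ℝ≥0∞) := by
              rw [← ENNReal.coe_finset_sum]
              exact_mod_cast nnnorm_sum_le s fun J => b₁ J * b₂ (I - J)
          _ = ∑ J ∈ s, (‖b₁ J‖₊ : ℝ≥0∞) * (‖b₂ (I - J)‖₊ : ℝ≥0∞) := by
              simp [nnnorm_mul]
      -- step 2: square it
      have step2 : (‖wickProd b₁ b₂ I‖₊ : ℝ≥0∞) ^ 2 ≤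
          2 * 2 ^ Multiset.card I *
            ∑ J ∈ s, ((‖b₁ J‖₊ : ℝ≥0∞) * (‖b₂ (I - J)‖₊ : ℝ≥0∞)) ^ 2 := by
        calc (‖wickProd b₁ b₂ I‖₊ : ℝ≥0∞) ^ 2
            ≤ (∑ J ∈ s, (‖b₁ J‖₊ : ℝ≥0∞) * (‖b₂ (I - J)‖₊ : ℝ≥0∞)) ^ 2 := by
              gcongr
          _ ≤ (2 * s.card) *
              ∑ J ∈ s, ((‖b₁ J‖₊ : ℝ≥0∞) * (‖b₂ (I - J)‖₊ : ℝ≥0∞)) ^ 2 :=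
              sq_sum_le_two_card_mul_sum_sq s _
          _ ≤ 2 * 2 ^ Multiset.card I *
              ∑ J ∈ s, ((‖b₁ J‖₊ : ℝ≥0∞) * (‖b₂ (I - J)‖₊ : ℝ≥0∞)) ^ 2 := by
              gcongr
      calc (‖wickProd b₁ b₂ I‖₊ : ℝ≥0∞) ^ 2 * W I * c ^ Multiset.card I
          ≤ (2 * 2 ^ Multiset.card I *
              ∑ J ∈ s, ((‖b₁ J‖₊ : ℝ≥0∞) * (‖b₂ (I - J)‖₊ : ℝ≥0∞)) ^ 2) *
              W I * c ^ Multiset.card I := by gcongr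
        _ = ∑ J ∈ s, 2 * (((‖b₁ J‖₊ : ℝ≥0∞) * (‖b₂ (I - J)‖₊ : ℝ≥0∞)) ^ 2 *
              W I * (2 * c) ^ Multiset.card I) := by
            rw [Finset.mul_sum, Finset.sum_mul, Finset.sum_mul]
            apply Finset.sum_congr rfl
            intro J _
            rw [mul_pow 2 c]
            ring
        _ = ∑ J ∈ s, 2 * A J * B (I - J) := by
            apply Finset.sum_congr rfl
            intro J hJ
            have hJI : J ≤ I := hmem J hJ
            have hIJ : I = J + (I - J) := by
              rw [add_comm]
              exact (tsub_add_cancel_of_le hJI).symm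
            simp only [hA, hB]
            conv_lhs => rw [hIJ, hW_add, Multiset.card_add]
            have hJJ : J + (I - J) - J = I - J := by simp
            rw [hJJ]
            ring
    calc fockNormSq C₁ r C (wickProd b₁ b₂)
        ≤ ∑' I : Multiset (ℤ × Fin n), ∑ J ∈ I.powerset.toFinset, 2 * A J * B (I - J) := by
          rw [fockNormSq]
          exact ENNReal.tsum_le_tsum pointwise
      _ = ∑' I : Multiset (ℤ × Fin n),
            ∑' J : I.powerset.toFinset, 2 * A (J : Multiset (ℤ × Fin n)) * B (I - J) := by
          apply tsum_congr
          intro I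
          exact (Finset.tsum_subtype _ fun J => 2 * A J * B (I - J)).symm
      _ = ∑' p : (Σ I : Multiset (ℤ × Fin n), I.powerset.toFinset),
            2 * A (p.2 : Multiset (ℤ × Fin n)) * B (p.1 - p.2) :=
          (ENNReal.tsum_sigma'
            (fun p : (Σ I : Multiset (ℤ × Fin n), I.powerset.toFinset) =>
              2 * A (p.2 : Multiset (ℤ × Fin n)) * B (p.1 - p.2))).symm
      _ ≤ ∑' q : Multiset (ℤ × Fin n) × Multiset (ℤ × Fin n), 2 * A q.1 * B q.2 := by
          have hinj : Function.Injective
              (fun p : (Σ I : Multiset (ℤ × Fin n), I.powerset.toFinset) =>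
                (((p.2 : Multiset (ℤ × Fin n)), p.1 - (p.2 : Multiset (ℤ × Fin n))) :
                  Multiset (ℤ × Fin n) × Multiset (ℤ × Fin n))) := by
            rintro ⟨I₁, J₁, hJ₁⟩ ⟨I₂, J₂, hJ₂⟩ h
            simp only [Prod.mk.injEq] at h
            obtain ⟨h1, h2⟩ := h
            rw [Multiset.mem_toFinset, Multiset.mem_powerset] at hJ₁ hJ₂
            subst h1
            have hI : I₁ = I₂ := by
              have h3 := congrArg (· + J₁) h2
              rwa [tsub_add_cancel_of_le hJ₁, tsub_add_cancel_of_le hJ₂] at h3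
            subst hI
            rfl
          exact ENNReal.tsum_comp_le_tsum_of_injective hinj
            (fun q : Multiset (ℤ × Fin n) × Multiset (ℤ × Fin n) => 2 * A q.1 * B q.2)
      _ = 2 * fockNormSq C₁ r (2 * C) b₁ * fockNormSq C₁ r (2 * C) b₂ := by
          rw [hSq1, hSq2]
          calc ∑' q : Multiset (ℤ × Fin n) × Multiset (ℤ × Fin n), 2 * A q.1 * B q.2
              = ∑' (a : Multiset (ℤ × Fin n)) (b : Multiset (ℤ × Fin n)),
                  2 * A a * B b := ENNReal.tsum_prod (f := fun a b => 2 * A a * B b)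
            _ = ∑' a : Multiset (ℤ × Fin n), 2 * A a * ∑' b : Multiset (ℤ × Fin n), B b := by
                apply tsum_congr; intro a; exact ENNReal.tsum_mul_left
            _ = 2 * (∑' a : Multiset (ℤ × Fin n), A a) * ∑' b : Multiset (ℤ × Fin n), B b := by
                rw [ENNReal.tsum_mul_right, ENNReal.tsum_mul_left]
  -- conclude for the norms
  have half_nonneg : (0 : ℝ) ≤ 1 / 2 := by norm_num
  calc fockNorm C₁ r C (wickProd b₁ b₂)
      ≤ (2 * fockNormSq C₁ r (2 * C) b₁ * fockNormSq C₁ r (2 * C) b₂) ^ (1 / 2 : ℝ) :=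
        ENNReal.rpow_le_rpow key half_nonneg
    _ = (2 : ℝ≥0∞) ^ (1 / 2 : ℝ) * fockNorm C₁ r (2 * C) b₁ * fockNorm C₁ r (2 * C) b₂ := by
        rw [ENNReal.mul_rpow_of_nonneg _ _ half_nonneg,
          ENNReal.mul_rpow_of_nonneg _ _ half_nonneg]
        rfl
    _ ≤ 2 * fockNorm C₁ r (2 * C) b₁ * fockNorm C₁ r (2 * C) b₂ := by
        gcongr
        calc (2 : ℝ≥0∞) ^ (1 / 2 : ℝ) ≤ (2 : ℝ≥0∞) ^ (1 : ℝ) :=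
            ENNReal.rpow_le_rpow_of_exponent_le (by norm_num) (by norm_num)
          _ = 2 := ENNReal.rpow_one 2
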